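/- If the minimal polynomial Γ of Φ_x = γ(x)·Id + g·π + Δ·π² were to have degree ν with 2ν ≤ n - 1, then evaluating Γ at Φ_x and expanding in powers of π yields a nontrivial L-linear relation c̄_0·Id + c̄_1·π + ... + c̄_{2ν}·π^{2ν} = 0 with leading coefficient c̄_{2ν} = Δ^{(1-q^{2ν})/(1-q)} ≠ 0, contradicting the linear independence of Id, π, ..., π^{n-1} over L. -/

import Mathlib

/-!
Write `Φ = F.eval` for the polynomial `F = c X + g X^q + Δ X^{q²}` over `L`. Then
`Γ(Φ) = Q.eval` for `Q = ∑ Γᵢ F^{∘i}`, whose degree is `q^{2ν}` because `Γ` is monic and the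
degrees `q^{2i}` of the iterates `F^{∘i}` strictly increase. As `Γ(Φ) = 0`, `Q` vanishes on
all of `L`, which has `q^n > q^{2ν}` elements, so `Q = 0`: impossible.
-/

open Polynomial Finset

namespace Polynomial

variable {R : Type*} [Semiring R] [Nontrivial R]

theorem natDegree_C_mul_X_add_C_mul_X_pow_add_C_mul_X_pow (a b : R) {c : R} (hc : c ≠ 0)
    {k m : ℕ} (hm : 1 < m) (hkm : k < m) :
    (C a * X + C b * X ^ k + C c * X ^ m).natDegree = m := by
  have hlow : (C a * X + C b * X ^ k).natDegree < m :=
    (natDegree_add_le _ _).trans_lt <| max_lt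
      ((natDegree_C_mul_le _ _).trans_lt (by rwa [natDegree_X]))
      ((natDegree_C_mul_X_pow_le _ _).trans_lt hkm)
  rw [natDegree_add_eq_right_of_natDegree_lt (by rwa [natDegree_C_mul_X_pow m c hc]),
    natDegree_C_mul_X_pow m c hc]

theorem natDegree_sum_C_mul_iterate_comp_X [NoZeroDivisors R] {F : R[X]} (hF : 1 < F.natDegree)
    {b : ℕ → R}
    {ν : ℕ} (hb : b ν ≠ 0) :
    (∑ i ∈ range (ν + 1), C (b i) * F.comp^[i] X).natDegree = F.natDegree ^ ν := by
  have hdeg : ∀ i, (F.comp^[i] X).natDegree = F.natDegree ^ i := fun i => by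
    rw [natDegree_iterate_comp, natDegree_X, mul_one]
  have htop : (C (b ν) * F.comp^[ν] X).natDegree = F.natDegree ^ ν := by
    rw [natDegree_C_mul hb, hdeg]
  have htop_ne : C (b ν) * F.comp^[ν] X ≠ 0 := by
    refine ne_zero_of_natDegree_gt (n := 0) ?_
    rw [htop]; positivity
  rw [sum_range_succ, natDegree_add_eq_right_of_degree_lt, htop]
  refine (degree_sum_le _ _).trans_lt ((Finset.sup_lt_iff (bot_lt_iff_ne_bot.2 ?_)).2 ?_)
  · rwa [Ne, degree_eq_bot]
  intro i hi
  calc (C (b i) * F.comp^[i] X).degree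
      ≤ (F.comp^[i] X).natDegree :=
        degree_le_natDegree.trans (by exact_mod_cast natDegree_C_mul_le _ _)
    _ < (C (b ν) * F.comp^[ν] X).natDegree := by
        rw [hdeg, htop]
        exact_mod_cast Nat.pow_lt_pow_right hF (mem_range.1 hi)
    _ = (C (b ν) * F.comp^[ν] X).degree := (degree_eq_natDegree htop_ne).symm

end Polynomial

theorem minpoly_small_degree_gives_contradiction_general
    (q n : ℕ) (Fq L : Type*) [Field Fq] [Fintype Fq] [Field L] [Algebra Fq L]
    [FiniteDimensional Fq L]
    (hq : q = Fintype.card Fq) (hn : Module.finrank Fq L = n)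
    (c g Δ : L) (hΔ : Δ ≠ 0)
    (Φ : L → L) (hΦ : ∀ v : L, Φ v = c * v + g * v ^ q + Δ * v ^ q ^ 2)
    (Γ : Polynomial Fq) (hmonic : Γ.Monic)
    (hann : ∀ v : L, ∑ i ∈ Finset.range (Γ.natDegree + 1),
        algebraMap Fq L (Γ.coeff i) * Φ^[i] v = 0)
    (hsmall : 2 * Γ.natDegree ≤ n - 1) (hn1 : 1 ≤ n) :
    (∃ cbar : ℕ → L,
      (∀ v : L, ∑ i ∈ Finset.range (2 * Γ.natDegree + 1), cbar i * v ^ q ^ i = 0) ∧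
      cbar (2 * Γ.natDegree) = Δ ^ ((q ^ (2 * Γ.natDegree) - 1) / (q - 1)) ∧
      cbar (2 * Γ.natDegree) ≠ 0) ∧ False := by
  have hq1 : 1 < q := hq ▸ Fintype.one_lt_card
  set F : L[X] := C c * X + C g * X ^ q + C Δ * X ^ q ^ 2
  have hF : F.natDegree = q ^ 2 :=
    natDegree_C_mul_X_add_C_mul_X_pow_add_C_mul_X_pow c g hΔ (by nlinarith) (by nlinarith)
  have hΦF : Φ = fun v => F.eval v := funext fun v => by simp [F, hΦ]
  set Q : L[X] := ∑ i ∈ range (Γ.natDegree + 1), C (algebraMap Fq L (Γ.coeff i)) * F.comp^[i] X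
  have hQ_eval : ∀ v, Q.eval v = 0 := fun v => by
    simpa [Q, eval_finsetSum, hΦF] using hann v
  have hQ_deg : Q.natDegree = q ^ (2 * Γ.natDegree) := by
    rw [natDegree_sum_C_mul_iterate_comp_X (by rw [hF]; nlinarith), hF, ← pow_mul]
    rw [hmonic.coeff_natDegree, map_one]; exact one_ne_zero
  have hcard : Nat.card L = q ^ n := by
    rw [Module.natCard_eq_pow_finrank (K := Fq), hn, hq, Nat.card_eq_fintype_card]
  have : Finite L := Module.finite_of_finite Fq
  have hQ_zero : Q = 0 := by
    refine eq_zero_of_forall_eval_zero_of_natDegree_lt_card Q hQ_eval ?_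
    rw [← Nat.cast_card, hcard, hQ_deg, Nat.cast_lt]
    exact Nat.pow_lt_pow_right hq1 (by omega)
  have hQ_deg_ne : q ^ (2 * Γ.natDegree) ≠ 0 := by positivity
  exact (hQ_deg_ne (by rw [← hQ_deg, hQ_zero, natDegree_zero])).elim

/-- if the minimal polynomial `Γ` of `Φ_x = γ(x)·Id + g·π + Δ·π²`
had degree `ν` with `2ν ≤ n - 1`, then evaluating `Γ` at `Φ_x` and expanding in
powers of `π` would yield a nontrivial `L`-linear relation
`c̄_0·Id + ⋯ + c̄_{2ν}·π^{2ν} = 0` whose leading coefficient is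
`c̄_{2ν} = Δ^{(1-q^{2ν})/(1-q)} = Δ^{(q^{2ν}-1)/(q-1)} ≠ 0`, contradicting the
linear independence of `Id, π, …, π^{n-1}` over `L` (hence `False`). -/
theorem minpoly_small_degree_gives_contradiction
    (q n : ℕ) (Fq L : Type*) [Field Fq] [Fintype Fq] [Field L] [Algebra Fq L]
    [FiniteDimensional Fq L]
    (hq : q = Fintype.card Fq) (hn : Module.finrank Fq L = n)
    (c g Δ : L) (hΔ : Δ ≠ 0)
    (γ : Polynomial Fq →+* L) (hc : c = γ Polynomial.X)
    (Φ : L → L) (hΦ : ∀ v : L, Φ v = c * v + g * v ^ q + Δ * v ^ q ^ 2)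
    (Γ : Polynomial Fq) (hmonic : Γ.Monic)
    (hann : ∀ v : L, ∑ i ∈ Finset.range (Γ.natDegree + 1),
        algebraMap Fq L (Γ.coeff i) * Φ^[i] v = 0)
    (hmin : ∀ G : Polynomial Fq, G ≠ 0 →
        (∀ v : L, ∑ i ∈ Finset.range (G.natDegree + 1),
          algebraMap Fq L (G.coeff i) * Φ^[i] v = 0) →
        Γ.natDegree ≤ G.natDegree)
    (hsmall : 2 * Γ.natDegree ≤ n - 1) (hn1 : 1 ≤ n) :
    (∃ cbar : ℕ → L,
      (∀ v : L, ∑ i ∈ Finset.range (2 * Γ.natDegree + 1), cbar i * v ^ q ^ i = 0) ∧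
      cbar (2 * Γ.natDegree) = Δ ^ ((q ^ (2 * Γ.natDegree) - 1) / (q - 1)) ∧
      cbar (2 * Γ.natDegree) ≠ 0) ∧ False :=
  minpoly_small_degree_gives_contradiction_general q n Fq L hq hn c g Δ hΔ Φ hΦ Γ hmonic hann hsmall
    hn1
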